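/- Let X be a real Banach space which is a 𝒦-space (with some constant), and let Y be a real Banach space which has the λ-bounded approximation property and is complemented in its bidual. Suppose C ≥ 0 is such that every bounded quasilinear map G : X → Y with constant 1 admits a (not necessarily continuous) linear map L : X → Y with ‖G(x) − L(x)‖ ≤ C‖x‖ for all x. Then every quasilinear map F : X → Y is trivial: there is a (not necessarily continuous) linear map L : X → Y with sup_{x≠0} ‖F(x) − L(x)‖/‖x‖ < ∞. In particular, if K₀(X,Y) is finite then K(X,Y) is finite. -/

import Mathlib

open Finset

/-- `F : X → Y` is quasilinear with constant `Q`. -/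
def IsQuasilinearWith {X Y : Type*} [NormedAddCommGroup X] [NormedSpace ℝ X]
    [NormedAddCommGroup Y] [NormedSpace ℝ Y] (Q : ℝ) (F : X → Y) : Prop :=
  (∀ (c : ℝ) (x : X), F (c • x) = c • F x) ∧
    ∀ x y : X, ‖F (x + y) - F x - F y‖ ≤ Q * (‖x‖ + ‖y‖)

/-- `X` has the `λ`-bounded approximation property: every finite-dimensional subspace
is fixed by a finite-rank operator of norm at most `λ`. -/
def HasBAPWith (lam : ℝ) (X : Type*) [NormedAddCommGroup X] [NormedSpace ℝ X] : Prop :=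
  ∀ E : Submodule ℝ X, FiniteDimensional ℝ E →
    ∃ u : X →L[ℝ] X, FiniteDimensional ℝ (LinearMap.range (u : X →ₗ[ℝ] X)) ∧
      ‖u‖ ≤ lam ∧ ∀ x ∈ E, u x = x

/-- `X` is a 𝒦-space with constant `K`: every real-valued homogeneous map with
quasilinearity constant 1 is at distance at most `K` from a (not necessarily
continuous) linear functional. -/
def IsKSpaceWith (K : ℝ) (X : Type*) [NormedAddCommGroup X] [NormedSpace ℝ X] : Prop :=
  ∀ f : X → ℝ, (∀ (c : ℝ) (x : X), f (c • x) = c * f x) →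
    (∀ x y : X, |f (x + y) - f x - f y| ≤ ‖x‖ + ‖y‖) →
    ∃ ℓ : X →ₗ[ℝ] ℝ, ∀ x : X, |f x - ℓ x| ≤ K * ‖x‖

/-!
Composing `F` with a finite-rank operator `u` of the approximation property gives a quasilinear
map with finite-dimensional range, which is trivial coordinatewise because `X` is a 𝒦-space.
Subtracting that linear approximation leaves a *bounded* quasilinear map, to which the
hypothesis on bounded maps applies, so `u ∘ F` lies within `(λ|Q| + 1) C ‖x‖` of a linear map
`Λ_u`, uniformly in `u`. Letting `u` fix ever larger finite-dimensional subspaces, a weak-*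
cluster point of the `Λ_u` (Banach–Alaoglu) is a linear map `X → Y**` within the same distance
of `F`, and the projection `Y** → Y` brings it back into `Y`.
-/

open Filter Topology

/-- `K₀(X, Y) ≤ C` in the paper's notation. -/
def K0LE (C : ℝ) (X Y : Type*) [NormedAddCommGroup X] [NormedSpace ℝ X]
    [NormedAddCommGroup Y] [NormedSpace ℝ Y] : Prop :=
  ∀ G : X → Y, IsQuasilinearWith 1 G → (∃ M : ℝ, ∀ x : X, ‖G x‖ ≤ M * ‖x‖) →
    ∃ L : X →ₗ[ℝ] Y, ∀ x : X, ‖G x - L x‖ ≤ C * ‖x‖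

section

variable {X Y Z : Type*} [NormedAddCommGroup X] [NormedSpace ℝ X]
  [NormedAddCommGroup Y] [NormedSpace ℝ Y] [NormedAddCommGroup Z] [NormedSpace ℝ Z]

namespace IsQuasilinearWith

variable {Q : ℝ} {F : X → Y}

theorem mono (hF : IsQuasilinearWith Q F) {Q' : ℝ} (hQ : Q ≤ Q') : IsQuasilinearWith Q' F :=
  ⟨hF.1, fun x y => (hF.2 x y).trans (by gcongr)⟩

theorem clm_comp (hF : IsQuasilinearWith Q F) (A : Y →L[ℝ] Z) :
    IsQuasilinearWith (‖A‖ * Q) (A ∘ F) := by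
  refine ⟨fun c x => by simp [hF.1 c x], fun x y => ?_⟩
  calc ‖A (F (x + y)) - A (F x) - A (F y)‖ = ‖A (F (x + y) - F x - F y)‖ := by
        rw [map_sub, map_sub]
    _ ≤ ‖A‖ * ‖F (x + y) - F x - F y‖ := A.le_opNorm _
    _ ≤ ‖A‖ * (Q * (‖x‖ + ‖y‖)) := by gcongr; exact hF.2 x y
    _ = ‖A‖ * Q * (‖x‖ + ‖y‖) := by ring

theorem const_smul (hF : IsQuasilinearWith Q F) (c : ℝ) :
    IsQuasilinearWith (|c| * Q) (c • F) := by
  refine ⟨fun a x => by simp [hF.1 a x, smul_comm c a], fun x y => ?_⟩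
  calc ‖c • F (x + y) - c • F x - c • F y‖ = |c| * ‖F (x + y) - F x - F y‖ := by
        rw [← smul_sub, ← smul_sub, norm_smul, Real.norm_eq_abs]
    _ ≤ |c| * (Q * (‖x‖ + ‖y‖)) := by gcongr; exact hF.2 x y
    _ = |c| * Q * (‖x‖ + ‖y‖) := by ring

theorem sub_linearMap (hF : IsQuasilinearWith Q F) (L : X →ₗ[ℝ] Y) :
    IsQuasilinearWith Q (F - ⇑L) := by
  refine ⟨fun c x => by simp [hF.1 c x, smul_sub], fun x y => ?_⟩
  have h : (F - ⇑L) (x + y) - (F - ⇑L) x - (F - ⇑L) y = F (x + y) - F x - F y := by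
    simp only [Pi.sub_apply, map_add]; abel
  exact h ▸ hF.2 x y

end IsQuasilinearWith

/-- The paper's *trivial* maps. -/
def IsNearLinear (F : X → Y) : Prop :=
  ∃ (L : X →ₗ[ℝ] Y) (M : ℝ), ∀ x, ‖F x - L x‖ ≤ M * ‖x‖

namespace IsNearLinear

theorem add {F G : X → Y} (hF : IsNearLinear F) (hG : IsNearLinear G) :
    IsNearLinear (F + G) := by
  obtain ⟨L₁, M₁, h₁⟩ := hF
  obtain ⟨L₂, M₂, h₂⟩ := hG
  refine ⟨L₁ + L₂, M₁ + M₂, fun x => ?_⟩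
  calc ‖(F + G) x - (L₁ + L₂) x‖ = ‖(F x - L₁ x) + (G x - L₂ x)‖ := by
        simp only [Pi.add_apply, LinearMap.add_apply]; abel_nf
    _ ≤ ‖F x - L₁ x‖ + ‖G x - L₂ x‖ := norm_add_le _ _
    _ ≤ M₁ * ‖x‖ + M₂ * ‖x‖ := add_le_add (h₁ x) (h₂ x)
    _ = (M₁ + M₂) * ‖x‖ := by ring

theorem sum {ι : Type*} (s : Finset ι) {F : ι → X → Y} (hF : ∀ i ∈ s, IsNearLinear (F i)) :
    IsNearLinear (∑ i ∈ s, F i) :=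
  Finset.sum_induction F IsNearLinear (fun _ _ => add) ⟨0, 0, fun x => by simp⟩ hF

theorem smul_const {f : X → ℝ} (hf : IsNearLinear f) (v : Y) :
    IsNearLinear fun x => f x • v := by
  obtain ⟨ℓ, M, h⟩ := hf
  refine ⟨ℓ.smulRight v, M * ‖v‖, fun x => ?_⟩
  calc ‖f x • v - ℓ x • v‖ = ‖f x - ℓ x‖ * ‖v‖ := by rw [← sub_smul, norm_smul]
    _ ≤ M * ‖x‖ * ‖v‖ := by gcongr; exact h x
    _ = M * ‖v‖ * ‖x‖ := by ring

theorem const_smul {F : X → Y} (hF : IsNearLinear F) (c : ℝ) : IsNearLinear (c • F) := by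
  obtain ⟨L, M, h⟩ := hF
  refine ⟨c • L, |c| * M, fun x => ?_⟩
  calc ‖c • F x - c • L x‖ = |c| * ‖F x - L x‖ := by
        rw [← smul_sub, norm_smul, Real.norm_eq_abs]
    _ ≤ |c| * (M * ‖x‖) := by gcongr; exact h x
    _ = |c| * M * ‖x‖ := by ring

theorem clm_comp {F : X → Y} (hF : IsNearLinear F) (A : Y →L[ℝ] Z) : IsNearLinear (A ∘ F) := by
  obtain ⟨L, M, h⟩ := hF
  refine ⟨(A : Y →ₗ[ℝ] Z) ∘ₗ L, ‖A‖ * M, fun x => ?_⟩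
  calc ‖A (F x) - A (L x)‖ = ‖A (F x - L x)‖ := by rw [map_sub]
    _ ≤ ‖A‖ * ‖F x - L x‖ := A.le_opNorm _
    _ ≤ ‖A‖ * (M * ‖x‖) := by gcongr; exact h x
    _ = ‖A‖ * M * ‖x‖ := by ring

end IsNearLinear

namespace IsKSpaceWith

variable {K Q : ℝ}

theorem isNearLinear {f : X → ℝ} (hK : IsKSpaceWith K X) (hf : IsQuasilinearWith Q f) :
    IsNearLinear f := by
  set c : ℝ := (|Q| + 1)⁻¹
  have hc0 : 0 < c := by positivity
  have hcf : IsQuasilinearWith 1 (c • f) := by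
    refine (hf.const_smul c).mono ?_
    rw [abs_of_pos hc0]
    calc c * Q ≤ c * (|Q| + 1) := by gcongr; linarith [le_abs_self Q]
      _ = 1 := inv_mul_cancel₀ (by positivity)
  obtain ⟨ℓ, hℓ⟩ := hK (c • f) (fun a x => by simpa using hcf.1 a x)
    (fun x y => by simpa using hcf.2 x y)
  have hnear : IsNearLinear (c • f) := ⟨ℓ, K, fun x => by simpa using hℓ x⟩
  simpa [smul_smul, inv_mul_cancel₀ hc0.ne'] using hnear.const_smul c⁻¹

theorem isNearLinear_of_finiteDimensional [FiniteDimensional ℝ Y] (hK : IsKSpaceWith K X)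
    {G : X → Y} (hG : IsQuasilinearWith Q G) : IsNearLinear G := by
  let b := Module.finBasis ℝ Y
  have hcoord : ∀ i, IsNearLinear fun x => b.coord i (G x) • b i := fun i =>
    (hK.isNearLinear (hG.clm_comp (LinearMap.toContinuousLinearMap (b.coord i)))).smul_const _
  convert IsNearLinear.sum Finset.univ fun i _ => hcoord i using 1
  ext x
  simp [b.sum_repr]

theorem isNearLinear_clm_comp (hK : IsKSpaceWith K X) {F : X → Y}
    (hF : IsQuasilinearWith Q F) (u : Y →L[ℝ] Z)
    [FiniteDimensional ℝ (LinearMap.range (u : Y →ₗ[ℝ] Z))] : IsNearLinear (u ∘ F) :=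
  (hK.isNearLinear_of_finiteDimensional
    (hF.clm_comp (u.codRestrict _ fun y => LinearMap.mem_range_self _ y))).clm_comp
    (Submodule.subtypeL _)

end IsKSpaceWith

theorem K0LE.exists_linearMap_near {C q : ℝ} (h0 : K0LE C X Y) (hq : 0 < q) {G : X → Y}
    (hG : IsQuasilinearWith q G) (hGb : ∃ M : ℝ, ∀ x : X, ‖G x‖ ≤ M * ‖x‖) :
    ∃ L : X →ₗ[ℝ] Y, ∀ x : X, ‖G x - L x‖ ≤ q * C * ‖x‖ := by
  obtain ⟨M, hM⟩ := hGb
  have hq' : IsQuasilinearWith 1 (q⁻¹ • G) := by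
    simpa [abs_of_pos hq, inv_mul_cancel₀ hq.ne'] using hG.const_smul q⁻¹
  obtain ⟨L, hL⟩ := h0 _ hq' ⟨q⁻¹ * M, fun x => by
    simpa [norm_smul, abs_of_pos hq, mul_assoc] using
      mul_le_mul_of_nonneg_left (hM x) (inv_nonneg.2 hq.le)⟩
  refine ⟨q • L, fun x => ?_⟩
  have hsplit : G x - (q • L) x = q • ((q⁻¹ • G) x - L x) := by
    simp [smul_sub, smul_smul, mul_inv_cancel₀ hq.ne']
  calc ‖G x - (q • L) x‖ = q * ‖(q⁻¹ • G) x - L x‖ := by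
        rw [hsplit, norm_smul, Real.norm_eq_abs, abs_of_pos hq]
    _ ≤ q * (C * ‖x‖) := by gcongr; exact hL x
    _ = q * C * ‖x‖ := by ring

theorem exists_linearMap_near_of_hasBAPWith {K lam C Q : ℝ} (hK : IsKSpaceWith K X)
    (hBAP : HasBAPWith lam Y) (h0 : K0LE C X Y)
    {F : X → Y} (hF : IsQuasilinearWith Q F) (E : Submodule ℝ Y) [FiniteDimensional ℝ E] :
    ∃ Λ : X →ₗ[ℝ] Y, ∀ x, F x ∈ E → ‖F x - Λ x‖ ≤ (|lam| * |Q| + 1) * C * ‖x‖ := by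
  obtain ⟨u, hfin, hu, hfix⟩ := hBAP E inferInstance
  have huF : IsQuasilinearWith (|lam| * |Q| + 1) (u ∘ F) := by
    refine (hF.clm_comp u).mono ?_
    calc ‖u‖ * Q ≤ ‖u‖ * |Q| := by gcongr; exact le_abs_self Q
      _ ≤ |lam| * |Q| := by gcongr; exact hu.trans (le_abs_self lam)
      _ ≤ |lam| * |Q| + 1 := by linarith
  obtain ⟨L₁, M, hL₁⟩ := hK.isNearLinear_clm_comp hF u
  obtain ⟨L₂, hL₂⟩ := h0.exists_linearMap_near (by positivity)
    (huF.sub_linearMap L₁) ⟨M, hL₁⟩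
  refine ⟨L₁ + L₂, fun x hx => ?_⟩
  have h := hL₂ x
  rwa [Pi.sub_apply, Function.comp_apply, hfix _ hx, sub_sub] at h

theorem exists_tendsto_weakStar {ι : Type*} (𝒰 : Ultrafilter ι) {y : ι → Y} {r : ℝ}
    (hr : ∀ᶠ i in 𝒰, ‖y i‖ ≤ r) :
    ∃ t : StrongDual ℝ (StrongDual ℝ Y), ∀ ψ : StrongDual ℝ Y,
      Tendsto (fun i => ψ (y i)) 𝒰 (𝓝 (t ψ)) := by
  let z : ι → WeakDual ℝ (StrongDual ℝ Y) := fun i =>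
    StrongDual.toWeakDual (NormedSpace.inclusionInDoubleDual ℝ Y (y i))
  have hball : ∀ᶠ i in 𝒰, z i ∈ WeakDual.toStrongDual ⁻¹' Metric.closedBall 0 r :=
    hr.mono fun i hi =>
      (mem_closedBall_zero_iff (E := StrongDual ℝ (StrongDual ℝ Y))).2
        ((NormedSpace.double_dual_bound ℝ Y (y i)).trans hi)
  obtain ⟨t, -, ht⟩ := (WeakDual.isCompact_closedBall 0 r).ultrafilter_le_nhds (𝒰.map z)
    (Filter.le_principal_iff.2 hball)
  exact ⟨WeakDual.toStrongDual t, fun ψ =>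
    tendsto_iff_forall_eval_tendsto_topDualPairing.1 ht ψ⟩

theorem exists_linearMap_tendsto_weakStar {ι : Type*} (𝒰 : Ultrafilter ι)
    (Λ : ι → X →ₗ[ℝ] Y) (hΛ : ∀ x, ∃ r, ∀ᶠ i in 𝒰, ‖Λ i x‖ ≤ r) :
    ∃ T : X →ₗ[ℝ] StrongDual ℝ (StrongDual ℝ Y), ∀ x (ψ : StrongDual ℝ Y),
      Tendsto (fun i => ψ (Λ i x)) 𝒰 (𝓝 (T x ψ)) := by
  choose r hr using hΛ
  choose T hT using fun x => exists_tendsto_weakStar 𝒰 (hr x)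
  refine ⟨{ toFun := T, map_add' := fun x y => ?_, map_smul' := fun c x => ?_ }, hT⟩
  · ext ψ
    exact tendsto_nhds_unique (hT (x + y) ψ) (by simpa using (hT x ψ).add (hT y ψ))
  · ext ψ
    exact tendsto_nhds_unique (hT (c • x) ψ) (by simpa using (hT x ψ).const_mul c)

theorem isNearLinear_of_eventually_near {ι : Type*} (l : Filter ι) [l.NeBot]
    {p : StrongDual ℝ (StrongDual ℝ Y) →L[ℝ] Y}
    (hp : ∀ y : Y, p (NormedSpace.inclusionInDoubleDual ℝ Y y) = y)
    {F : X → Y} (Λ : ι → X →ₗ[ℝ] Y) {M : ℝ} (hM : 0 ≤ M)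
    (hΛ : ∀ x, ∀ᶠ i in l, ‖F x - Λ i x‖ ≤ M * ‖x‖) : IsNearLinear F := by
  have hΛ𝒰 : ∀ x, ∀ᶠ i in (Ultrafilter.of l : Filter ι), ‖F x - Λ i x‖ ≤ M * ‖x‖ :=
    fun x => Ultrafilter.of_le l (hΛ x)
  obtain ⟨T, hT⟩ := exists_linearMap_tendsto_weakStar (Ultrafilter.of l) Λ fun x =>
    ⟨‖F x‖ + M * ‖x‖, (hΛ𝒰 x).mono fun i hi =>
      (norm_le_norm_add_norm_sub (F x) (Λ i x)).trans (by gcongr)⟩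
  have hT_near : ∀ x, ‖NormedSpace.inclusionInDoubleDual ℝ Y (F x) - T x‖ ≤ M * ‖x‖ :=
    fun x => ContinuousLinearMap.opNorm_le_bound _ (by positivity) fun ψ =>
      le_of_tendsto (tendsto_const_nhds.sub (hT x ψ)).norm <| (hΛ𝒰 x).mono fun i hi =>
        calc ‖ψ (F x) - ψ (Λ i x)‖ = ‖ψ (F x - Λ i x)‖ := by rw [map_sub]
          _ ≤ ‖ψ‖ * ‖F x - Λ i x‖ := ψ.le_opNorm _
          _ ≤ ‖ψ‖ * (M * ‖x‖) := by gcongr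
          _ = M * ‖x‖ * ‖ψ‖ := by ring
  -- The type of `p` elaborates with the strong topology on `Y**`, which is only defeq (not
  -- reducibly) the norm topology, so `‖p‖` is unavailable; rebuilding `p` yields its bound.
  obtain ⟨c, hc, hpc⟩ := ContinuousLinearMap.bound (𝕜 := ℝ)
    (E := StrongDual ℝ (StrongDual ℝ Y)) (F := Y)
    ⟨(p : StrongDual ℝ (StrongDual ℝ Y) →ₗ[ℝ] Y), p.continuous⟩
  refine ⟨(p : StrongDual ℝ (StrongDual ℝ Y) →ₗ[ℝ] Y) ∘ₗ T, c * M, fun x => ?_⟩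
  calc ‖F x - p (T x)‖ = ‖p (NormedSpace.inclusionInDoubleDual ℝ Y (F x) - T x)‖ := by
        have h := p.map_sub (NormedSpace.inclusionInDoubleDual ℝ Y (F x)) (T x)
        rw [hp] at h
        exact congrArg norm h.symm
    _ ≤ c * ‖NormedSpace.inclusionInDoubleDual ℝ Y (F x) - T x‖ := hpc _
    _ ≤ c * (M * ‖x‖) := by gcongr; exact hT_near x
    _ = c * M * ‖x‖ := by ring

end

theorem K_finite_of_K0_finite_of_KSpace_general {X Y : Type*} [NormedAddCommGroup X]
    [NormedSpace ℝ X] [NormedAddCommGroup Y] [NormedSpace ℝ Y]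
    (hX : ∃ K : ℝ, IsKSpaceWith K X)
    (lam : ℝ) (hBAP : HasBAPWith lam Y)
    (hbidual : ∃ p : StrongDual ℝ (StrongDual ℝ Y) →L[ℝ] Y,
      ∀ y : Y, p (NormedSpace.inclusionInDoubleDual ℝ Y y) = y)
    (C : ℝ) (hC : 0 ≤ C)
    (h0 : ∀ G : X → Y, IsQuasilinearWith 1 G → (∃ M : ℝ, ∀ x : X, ‖G x‖ ≤ M * ‖x‖) →
      ∃ L : X →ₗ[ℝ] Y, ∀ x : X, ‖G x - L x‖ ≤ C * ‖x‖)
    (F : X → Y) (hF : ∃ Q : ℝ, IsQuasilinearWith Q F) :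
    ∃ (L : X →ₗ[ℝ] Y) (M : ℝ), ∀ x : X, ‖F x - L x‖ ≤ M * ‖x‖ := by
  obtain ⟨K, hK⟩ := hX
  obtain ⟨p, hp⟩ := hbidual
  obtain ⟨Q, hF⟩ := hF
  choose Λ hΛ using fun s : Finset Y =>
    exists_linearMap_near_of_hasBAPWith hK hBAP h0 hF (Submodule.span ℝ (s : Set Y))
  exact isNearLinear_of_eventually_near atTop hp Λ (by positivity) fun x =>
    (eventually_ge_atTop {F x}).mono fun s hs =>
      hΛ s x (Submodule.subset_span (hs (Finset.mem_singleton_self _)))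

/-- if `X` is a 𝒦-space, `Y` has the `λ`-BAP and is complemented in its
bidual, and every bounded quasilinear map `X → Y` with constant 1 is at distance at most
`C` from a linear map, then every quasilinear map `F : X → Y` is trivial; in particular,
if `K₀(X,Y)` is finite then so is `K(X,Y)`. -/
theorem K_finite_of_K0_finite_of_KSpace {X Y : Type*} [NormedAddCommGroup X]
    [NormedSpace ℝ X] [CompleteSpace X] [NormedAddCommGroup Y] [NormedSpace ℝ Y]
    [CompleteSpace Y] (hX : ∃ K : ℝ, IsKSpaceWith K X)
    (lam : ℝ) (hBAP : HasBAPWith lam Y)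
    (hbidual : ∃ p : StrongDual ℝ (StrongDual ℝ Y) →L[ℝ] Y,
      ∀ y : Y, p (NormedSpace.inclusionInDoubleDual ℝ Y y) = y)
    (C : ℝ) (hC : 0 ≤ C)
    (h0 : ∀ G : X → Y, IsQuasilinearWith 1 G → (∃ M : ℝ, ∀ x : X, ‖G x‖ ≤ M * ‖x‖) →
      ∃ L : X →ₗ[ℝ] Y, ∀ x : X, ‖G x - L x‖ ≤ C * ‖x‖)
    (F : X → Y) (hF : ∃ Q : ℝ, IsQuasilinearWith Q F) :
    ∃ (L : X →ₗ[ℝ] Y) (M : ℝ), ∀ x : X, ‖F x - L x‖ ≤ M * ‖x‖ :=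
  K_finite_of_K0_finite_of_KSpace_general hX lam hBAP hbidual C hC h0 F hF
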